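/- arXiv:2407.01508 — 10 statements merged into one kernel-verified Lean document; each statement's English description precedes it below -/
import Mathlib

section
/- A pair (A,B), with A a connection one-form on P and B a section of Ad P, is a critical point of the cone Yang–Mills functional S_cYM — i.e. (d/dt)|_{t=0} S_cYM(A+tη, B+tξ) = 0 for all η ∈ Ω¹(M, Ad P) and ξ ∈ Ω⁰(M, Ad P) — if and only if it satisfies the cone Yang–Mills equations: d_A^*(F_A + ζB) + [B, d_A B] = 0 and ζ^*(F_A + ζB) + d_A^* d_A B = 0. -/
open scoped RealInnerProductSpace

/-!
Along a line `t ↦ (A + tη, B + tξ)` both `F_A + ζB` and `d_A B` are quadratic polynomials in `t`,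
so the first variation of `S_cYM` is `2 (⟨F_A + ζB, d_A η + ζξ⟩ + ⟨d_A B, d_A ξ + [η, B]⟩)`.
Moving every operator to the other side of the inner product writes it as
`2 (⟨η, d_A^*(F_A + ζB) + [B, d_A B]⟩ + ⟨ξ, ζ^*(F_A + ζB) + d_A^* d_A B⟩)`, which vanishes for
all `(η, ξ)` exactly when both Euler–Lagrange expressions vanish.
-/

theorem HasDerivAt.hasDerivAt_zero_iff {f : ℝ → ℝ} {f' x : ℝ} (hf : HasDerivAt f f' x) :
    HasDerivAt f 0 x ↔ f' = 0 :=
  ⟨hf.unique, fun h => h ▸ hf⟩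

theorem hasDerivAt_add_smul_add_sq_smul {E : Type*} [NormedAddCommGroup E] [NormedSpace ℝ E]
    (x v u : E) : HasDerivAt (fun t : ℝ => x + t • v + t ^ 2 • u) v 0 := by
  have hline : HasDerivAt (fun t : ℝ => x + t • v) v 0 := by
    simpa using ((hasDerivAt_id (0 : ℝ)).smul_const v).const_add x
  have hsq : HasDerivAt (fun t : ℝ => t ^ 2) 0 (0 : ℝ) := by
    simpa using hasDerivAt_pow 2 (0 : ℝ)
  exact (hline.add (hsq.smul_const u)).congr_deriv (by simp)

theorem forall_inner_add_inner_eq_zero_iff {E F : Type*}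
    [NormedAddCommGroup E] [InnerProductSpace ℝ E] [NormedAddCommGroup F] [InnerProductSpace ℝ F]
    (a : E) (b : F) : (∀ (x : E) (y : F), ⟪x, a⟫ + ⟪y, b⟫ = 0) ↔ a = 0 ∧ b = 0 := by
  refine ⟨fun h => ⟨?_, ?_⟩, fun ⟨ha, hb⟩ x y => by simp [ha, hb]⟩
  · simpa using h a 0
  · simpa using h 0 b

section ConeYangMills

variable {Ω0 Ω1 Ω2 : Type*}
  [NormedAddCommGroup Ω0] [InnerProductSpace ℝ Ω0]
  [NormedAddCommGroup Ω1] [InnerProductSpace ℝ Ω1]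
  [NormedAddCommGroup Ω2] [InnerProductSpace ℝ Ω2]

theorem curvature_add_smul {d1 : Ω1 →ₗ[ℝ] Ω2} {w : Ω1 →ₗ[ℝ] Ω1 →ₗ[ℝ] Ω2} {F : Ω1 → Ω2}
    (hF : ∀ A' : Ω1, F A' = d1 A' + w A' A') {dA1 : Ω1 → Ω1 →ₗ[ℝ] Ω2}
    (hdA1 : ∀ (A' η : Ω1), dA1 A' η = d1 η + w A' η + w η A') (A η : Ω1) (t : ℝ) :
    F (A + t • η) = F A + t • dA1 A η + t ^ 2 • w η η := by
  simp only [hF, hdA1, map_add, map_smul, LinearMap.add_apply, LinearMap.smul_apply, smul_add,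
    smul_smul]
  module

theorem covariantDeriv_add_smul {d0 : Ω0 →ₗ[ℝ] Ω1} {br : Ω1 →ₗ[ℝ] Ω0 →ₗ[ℝ] Ω1}
    {dA0 : Ω1 → Ω0 →ₗ[ℝ] Ω1} (hdA0 : ∀ (A' : Ω1) (ξ : Ω0), dA0 A' ξ = d0 ξ + br A' ξ)
    (A η : Ω1) (B ξ : Ω0) (t : ℝ) :
    dA0 (A + t • η) (B + t • ξ) = dA0 A B + t • (dA0 A ξ + br η B) + t ^ 2 • br η ξ := by
  simp only [hdA0, map_add, map_smul, LinearMap.add_apply, LinearMap.smul_apply, smul_add,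
    smul_smul]
  module

theorem hasDerivAt_coneYangMills_comp_line {d0 : Ω0 →ₗ[ℝ] Ω1} {d1 : Ω1 →ₗ[ℝ] Ω2}
    {w : Ω1 →ₗ[ℝ] Ω1 →ₗ[ℝ] Ω2} {br : Ω1 →ₗ[ℝ] Ω0 →ₗ[ℝ] Ω1} {zw : Ω0 →ₗ[ℝ] Ω2}
    {F : Ω1 → Ω2} (hF : ∀ A' : Ω1, F A' = d1 A' + w A' A') {dA1 : Ω1 → Ω1 →ₗ[ℝ] Ω2}
    (hdA1 : ∀ (A' η : Ω1), dA1 A' η = d1 η + w A' η + w η A') {dA0 : Ω1 → Ω0 →ₗ[ℝ] Ω1}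
    (hdA0 : ∀ (A' : Ω1) (ξ : Ω0), dA0 A' ξ = d0 ξ + br A' ξ) {S : Ω1 → Ω0 → ℝ}
    (hS : ∀ (A' : Ω1) (B' : Ω0), S A' B' = ‖F A' + zw B'‖ ^ 2 + ‖dA0 A' B'‖ ^ 2)
    (A η : Ω1) (B ξ : Ω0) :
    HasDerivAt (fun t : ℝ => S (A + t • η) (B + t • ξ))
      (2 * ⟪F A + zw B, dA1 A η + zw ξ⟫ + 2 * ⟪dA0 A B, dA0 A ξ + br η B⟫) 0 := by
  have hcurv : ∀ t : ℝ, F (A + t • η) + zw (B + t • ξ)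
      = F A + zw B + t • (dA1 A η + zw ξ) + t ^ 2 • w η η := fun t => by
    rw [curvature_add_smul hF hdA1, map_add, map_smul]
    module
  have hline : (fun t : ℝ => S (A + t • η) (B + t • ξ)) = fun t : ℝ =>
      ‖F A + zw B + t • (dA1 A η + zw ξ) + t ^ 2 • w η η‖ ^ 2
        + ‖dA0 A B + t • (dA0 A ξ + br η B) + t ^ 2 • br η ξ‖ ^ 2 := by
    ext t
    rw [hS, hcurv, covariantDeriv_add_smul hdA0]
  rw [hline]
  exact ((hasDerivAt_add_smul_add_sq_smul _ _ _).norm_sq.add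
    (hasDerivAt_add_smul_add_sq_smul _ _ _).norm_sq).congr_deriv (by simp)

end ConeYangMills

theorem cone_yang_mills_critical_iff_euler_lagrange_general
    {Ω0 Ω1 Ω2 : Type*}
    [NormedAddCommGroup Ω0] [InnerProductSpace ℝ Ω0]
    [NormedAddCommGroup Ω1] [InnerProductSpace ℝ Ω1]
    [NormedAddCommGroup Ω2] [InnerProductSpace ℝ Ω2]
    -- exterior differential, wedge product and brackets
    (d0 : Ω0 →ₗ[ℝ] Ω1) (d1 : Ω1 →ₗ[ℝ] Ω2)
    (w : Ω1 →ₗ[ℝ] Ω1 →ₗ[ℝ] Ω2)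
    (br : Ω1 →ₗ[ℝ] Ω0 →ₗ[ℝ] Ω1) (bk : Ω0 →ₗ[ℝ] Ω1 →ₗ[ℝ] Ω1)
    -- wedging with the closed two-form ζ and its adjoint ζ^*
    (zw : Ω0 →ₗ[ℝ] Ω2) (zs : Ω2 →ₗ[ℝ] Ω0)
    (hz : ∀ (ξ : Ω0) (x : Ω2), ⟪zw ξ, x⟫ = ⟪ξ, zs x⟫)
    -- curvature F_{A'} = dA' + A' ∧ A' and covariant derivatives
    (F : Ω1 → Ω2) (hF : ∀ A' : Ω1, F A' = d1 A' + w A' A')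
    (dA1 : Ω1 → Ω1 →ₗ[ℝ] Ω2)
    (hdA1 : ∀ (A' η : Ω1), dA1 A' η = d1 η + w A' η + w η A')
    (dA0 : Ω1 → Ω0 →ₗ[ℝ] Ω1)
    (hdA0 : ∀ (A' : Ω1) (ξ : Ω0), dA0 A' ξ = d0 ξ + br A' ξ)
    -- the connection one-form A and the section B
    (A : Ω1) (B : Ω0)
    -- the formal adjoints d_A^* of d_A
    (dA1s : Ω2 →ₗ[ℝ] Ω1)
    (hdA1s : ∀ (η : Ω1) (x : Ω2), ⟪dA1 A η, x⟫ = ⟪η, dA1s x⟫)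
    (dA0s : Ω1 →ₗ[ℝ] Ω0)
    (hdA0s : ∀ (ξ : Ω0) (y : Ω1), ⟪dA0 A ξ, y⟫ = ⟪ξ, dA0s y⟫)
    -- Ad-invariance of the inner product: ⟨[η, B'], y⟩ = ⟨η, [B', y]⟩
    (hbr : ∀ (η : Ω1) (B' : Ω0) (y : Ω1), ⟪br η B', y⟫ = ⟪η, bk B' y⟫)
    -- the cone Yang–Mills functional
    (S : Ω1 → Ω0 → ℝ)
    (hS : ∀ (A' : Ω1) (B' : Ω0), S A' B' = ‖F A' + zw B'‖ ^ 2 + ‖dA0 A' B'‖ ^ 2) :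
    (∀ (η : Ω1) (ξ : Ω0), HasDerivAt (fun t : ℝ => S (A + t • η) (B + t • ξ)) 0 0)
      ↔ (dA1s (F A + zw B) + bk B (dA0 A B) = 0
          ∧ zs (F A + zw B) + dA0s (dA0 A B) = 0) := by
  have first_variation : ∀ (η : Ω1) (ξ : Ω0),
      HasDerivAt (fun t : ℝ => S (A + t • η) (B + t • ξ))
        (2 * (⟪η, dA1s (F A + zw B) + bk B (dA0 A B)⟫
          + ⟪ξ, zs (F A + zw B) + dA0s (dA0 A B)⟫)) 0 := fun η ξ => by
    refine (hasDerivAt_coneYangMills_comp_line hF hdA1 hdA0 hS A η B ξ).congr_deriv ?_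
    simp only [inner_add_left, inner_add_right, ← hdA1s, ← hz, ← hdA0s, ← hbr, real_inner_comm]
    ring
  simp_rw [fun η ξ => (first_variation η ξ).hasDerivAt_zero_iff, mul_eq_zero,
    two_ne_zero, false_or]
  exact forall_inner_add_inner_eq_zero_iff _ _

/-- **critical points of the cone Yang–Mills functional.**

Abstract formulation over a Riemannian manifold `(M^m, g)` with a principal `G`-bundle
`P` and a closed two-form `ζ ∈ Ω²(M)`:

* `Ω0, Ω1, Ω2` model `Ω⁰(M, Ad P)`, `Ω¹(M, Ad P)`, `Ω²(M, Ad P)` equipped with their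
  `L²` inner products (induced by `g` and an `Ad`-invariant inner product on `Ad P`);
* `d0, d1` model the exterior differential (in a fixed trivialisation),
  `w η ξ = η ∧ ξ`, `br η B = [η, B]` and `bk B η = [B, η]` the graded brackets,
  `zw B = ζ B` wedging with `ζ`, and `zs = ζ^* = (-1)^{(m-k)k} * ζ *` its adjoint;
* `F A' = dA' + A' ∧ A'` is the curvature, `dA1 A' η = dη + [A', η]` and
  `dA0 A' B = dB + [A', B]` the covariant derivatives,
  `dA1s = d_A^*` and `dA0s = d_A^*` the formal adjoints `(-1)^{mk+m+1} * d_A *`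
  (characterised here by the adjointness identities);
* `S A' B' = ‖F_{A'} + ζ B'‖² + ‖d_{A'} B'‖²` is the cone Yang–Mills functional.

The pair `(A, B)` is a critical point of `S_cYM`, i.e.
`(d/dt)|_{t=0} S_cYM(A + tη, B + tξ) = 0` for all `η ∈ Ω¹(M, Ad P)` and
`ξ ∈ Ω⁰(M, Ad P)`, if and only if it satisfies the cone Yang–Mills equations
`d_A^*(F_A + ζB) + [B, d_A B] = 0` and `ζ^*(F_A + ζB) + d_A^* d_A B = 0`. -/
theorem cone_yang_mills_critical_iff_euler_lagrange
    {Ω0 Ω1 Ω2 : Type*}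
    [NormedAddCommGroup Ω0] [InnerProductSpace ℝ Ω0]
    [NormedAddCommGroup Ω1] [InnerProductSpace ℝ Ω1]
    [NormedAddCommGroup Ω2] [InnerProductSpace ℝ Ω2]
    -- exterior differential, wedge product and brackets
    (d0 : Ω0 →ₗ[ℝ] Ω1) (d1 : Ω1 →ₗ[ℝ] Ω2)
    (w : Ω1 →ₗ[ℝ] Ω1 →ₗ[ℝ] Ω2)
    (br : Ω1 →ₗ[ℝ] Ω0 →ₗ[ℝ] Ω1) (bk : Ω0 →ₗ[ℝ] Ω1 →ₗ[ℝ] Ω1)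
    (hbk : ∀ (B' : Ω0) (η : Ω1), bk B' η = - br η B')
    -- wedging with the closed two-form ζ and its adjoint ζ^*
    (zw : Ω0 →ₗ[ℝ] Ω2) (zs : Ω2 →ₗ[ℝ] Ω0)
    (hz : ∀ (ξ : Ω0) (x : Ω2), ⟪zw ξ, x⟫ = ⟪ξ, zs x⟫)
    -- curvature F_{A'} = dA' + A' ∧ A' and covariant derivatives
    (F : Ω1 → Ω2) (hF : ∀ A' : Ω1, F A' = d1 A' + w A' A')
    (dA1 : Ω1 → Ω1 →ₗ[ℝ] Ω2)
    (hdA1 : ∀ (A' η : Ω1), dA1 A' η = d1 η + w A' η + w η A')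
    (dA0 : Ω1 → Ω0 →ₗ[ℝ] Ω1)
    (hdA0 : ∀ (A' : Ω1) (ξ : Ω0), dA0 A' ξ = d0 ξ + br A' ξ)
    -- the connection one-form A and the section B
    (A : Ω1) (B : Ω0)
    -- the formal adjoints d_A^* of d_A
    (dA1s : Ω2 →ₗ[ℝ] Ω1)
    (hdA1s : ∀ (η : Ω1) (x : Ω2), ⟪dA1 A η, x⟫ = ⟪η, dA1s x⟫)
    (dA0s : Ω1 →ₗ[ℝ] Ω0)
    (hdA0s : ∀ (ξ : Ω0) (y : Ω1), ⟪dA0 A ξ, y⟫ = ⟪ξ, dA0s y⟫)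
    -- Ad-invariance of the inner product: ⟨[η, B'], y⟩ = ⟨η, [B', y]⟩
    (hbr : ∀ (η : Ω1) (B' : Ω0) (y : Ω1), ⟪br η B', y⟫ = ⟪η, bk B' y⟫)
    -- the cone Yang–Mills functional
    (S : Ω1 → Ω0 → ℝ)
    (hS : ∀ (A' : Ω1) (B' : Ω0), S A' B' = ‖F A' + zw B'‖ ^ 2 + ‖dA0 A' B'‖ ^ 2) :
    (∀ (η : Ω1) (ξ : Ω0), HasDerivAt (fun t : ℝ => S (A + t • η) (B + t • ξ)) 0 0)
      ↔ (dA1s (F A + zw B) + bk B (dA0 A B) = 0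
          ∧ zs (F A + zw B) + dA0s (dA0 A B) = 0) :=
  cone_yang_mills_critical_iff_euler_lagrange_general d0 d1 w br bk zw zs hz F hF dA1 hdA1 dA0 hdA0
    A B dA1s hdA1s dA0s hdA0s hbr S hS
end

section
/- Let M be a closed Riemannian manifold and take ζ = 0. Then (A,B) is a cone Yang–Mills solution if and only if A is a Yang–Mills connection (d_A^* F_A = 0) and B is covariantly constant (d_A B = 0). -/
open scoped RealInnerProductSpace

/-! With `ζ = 0` the second equation reads `d_A^* d_A B = 0`; pairing it with `B` and moving
`d_A^*` across gives `‖d_A B‖² = 0`, after which the bracket term in the first equation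
vanishes and it becomes `d_A^* F_A = 0`. -/

theorem LinearMap.apply_eq_zero_of_adjoint_apply_eq_zero {𝕜 E F : Type*} [RCLike 𝕜]
    [NormedAddCommGroup E] [InnerProductSpace 𝕜 E]
    [NormedAddCommGroup F] [InnerProductSpace 𝕜 F]
    {T : E →ₗ[𝕜] F} {S : F →ₗ[𝕜] E} (hadj : ∀ x y, inner 𝕜 (T x) y = inner 𝕜 x (S y))
    {x : E} (hx : S (T x) = 0) : T x = 0 := by
  have h : inner 𝕜 (T x) (T x) = 0 := by rw [hadj, hx, inner_zero_right]
  exact inner_self_eq_zero.mp h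

-- `Ω0, Ω1, Ω2` model `Ω⁰(M, Ad P)`, `Ω¹(M, Ad P)`, `Ω²(M, Ad P)` with their `L²` products;
-- `hadj` (no boundary term) is where closedness of `M` enters.
/-- **cone Yang–Mills solutions with `ζ = 0` on a closed manifold.**

Abstract formulation: `Ω0, Ω1, Ω2` model `Ω⁰(M, Ad P)`, `Ω¹(M, Ad P)`, `Ω²(M, Ad P)`
with their `L²` inner products over a closed Riemannian manifold `M`; `dA0 = d_A` is
the covariant derivative on sections with formal adjoint `dA0s = d_A^*` (adjointness,
with no boundary terms, encodes closedness of `M`), `dA1s = d_A^*` on two-forms,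
`bk B η = [B, η]`, and `FA = F_A` is the curvature of `A`.  We take `ζ = 0`, i.e.
`zw = 0` (wedging with ζ) and `zs = 0` (its adjoint `ζ^*`).

Then `(A, B)` satisfies the cone Yang–Mills equations
`d_A^*(F_A + ζB) + [B, d_A B] = 0` and `ζ^*(F_A + ζB) + d_A^* d_A B = 0`
if and only if `A` is a Yang–Mills connection (`d_A^* F_A = 0`) and `B` is covariantly
constant (`d_A B = 0`). -/
theorem cone_yang_mills_zeta_eq_zero
    {Ω0 Ω1 Ω2 : Type*}
    [NormedAddCommGroup Ω0] [InnerProductSpace ℝ Ω0]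
    [NormedAddCommGroup Ω1] [InnerProductSpace ℝ Ω1]
    [AddCommGroup Ω2] [Module ℝ Ω2]
    (dA0 : Ω0 →ₗ[ℝ] Ω1)            -- d_A on sections
    (dA0s : Ω1 →ₗ[ℝ] Ω0)           -- d_A^* on one-forms
    (hadj : ∀ (ξ : Ω0) (y : Ω1), ⟪dA0 ξ, y⟫ = ⟪ξ, dA0s y⟫)
    (dA1s : Ω2 →ₗ[ℝ] Ω1)           -- d_A^* on two-forms
    (zw : Ω0 →ₗ[ℝ] Ω2) (zs : Ω2 →ₗ[ℝ] Ω0)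
    (hzw : zw = 0) (hzs : zs = 0)   -- ζ = 0
    (bk : Ω0 →ₗ[ℝ] Ω1 →ₗ[ℝ] Ω1)    -- bracket [·, ·] : Ω⁰ × Ω¹ → Ω¹
    (FA : Ω2) (B : Ω0) :
    (dA1s (FA + zw B) + bk B (dA0 B) = 0 ∧ zs (FA + zw B) + dA0s (dA0 B) = 0)
      ↔ (dA1s FA = 0 ∧ dA0 B = 0) := by
  subst hzw hzs
  simp only [LinearMap.zero_apply, add_zero, zero_add]
  constructor
  · rintro ⟨hYM, hLaplace⟩
    have hB : dA0 B = 0 := LinearMap.apply_eq_zero_of_adjoint_apply_eq_zero hadj hLaplace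
    rw [hB, map_zero, add_zero] at hYM
    exact ⟨hYM, hB⟩
  · rintro ⟨hYM, hB⟩
    simp [hYM, hB]
end

section
/- Suppose (A,B) is a cone-flat solution with respect to ζ, i.e. F_A + ζB = 0 and d_A B = 0. If ζ is a harmonic two-form (dζ = d^*ζ = 0), then A is a Yang–Mills connection: d_A * F_A = 0. -/
/-- **cone-flat pairs for harmonic `ζ` have Yang–Mills connection.**

Abstract formulation over an `m`-dimensional Riemannian manifold `M`:

* `Ω0, Ω1, Ω2` model `Ω⁰(M, Ad P)`, `Ω¹(M, Ad P)`, `Ω²(M, Ad P)`;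
* `W, W'` model the `Ad P`-valued `(m-2)`- and `(m-1)`-forms, and `S, S'` the
  scalar `(m-2)`- and `(m-1)`-forms;
* `zw B = ζ B` is wedging with the closed two-form `ζ`, `dA0 = d_A` on sections,
  `star2 = *` the Hodge star on `Ad P`-valued two-forms, `dAW = d_A` on
  `Ad P`-valued `(m-2)`-forms, `dS = d` on scalar `(m-2)`-forms;
* `sm0 σ B = σ B`, `sm0' τ B = τ B`, `sm1 σ η = σ ∧ η` are (wedge) products of scalar
  forms with `Ad P`-valued forms, and `sz = *ζ ∈ Ω^{m-2}(M)`;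
* `hstar` is the identity `*(ζ B) = (*ζ) B`, `hLeib` the Leibniz rule
  `d_A(σ B) = (dσ) B + (-1)^{m-2} σ ∧ d_A B`, and `hharm` says `ζ` is harmonic:
  `d^* ζ = 0`, i.e. `d(*ζ) = 0` (it is closed by assumption).

If `(A, B)` is cone-flat with respect to `ζ`, i.e. `F_A + ζ B = 0` and `d_A B = 0`,
then `A` is a Yang–Mills connection: `d_A * F_A = 0`. -/
theorem cone_flat_harmonic_zeta_yang_mills
    (m : ℕ)
    {Ω0 Ω1 Ω2 W W' S S' : Type*}
    [AddCommGroup Ω0] [Module ℝ Ω0] [AddCommGroup Ω1] [Module ℝ Ω1]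
    [AddCommGroup Ω2] [Module ℝ Ω2]
    [AddCommGroup W] [Module ℝ W] [AddCommGroup W'] [Module ℝ W']
    [AddCommGroup S] [Module ℝ S] [AddCommGroup S'] [Module ℝ S']
    (zw : Ω0 →ₗ[ℝ] Ω2)                 -- ζ ∧ ·
    (dA0 : Ω0 →ₗ[ℝ] Ω1)                -- d_A on sections
    (star2 : Ω2 →ₗ[ℝ] W)               -- Hodge star * : Ω² → Ω^{m-2}
    (dAW : W →ₗ[ℝ] W')                 -- d_A on Ad P-valued (m-2)-forms
    (dS : S →ₗ[ℝ] S')                  -- d on scalar (m-2)-forms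
    (sm0 : S →ₗ[ℝ] Ω0 →ₗ[ℝ] W)         -- (scalar (m-2)-form) · (section)
    (sm0' : S' →ₗ[ℝ] Ω0 →ₗ[ℝ] W')      -- (scalar (m-1)-form) · (section)
    (sm1 : S →ₗ[ℝ] Ω1 →ₗ[ℝ] W')        -- (scalar (m-2)-form) ∧ (Ad P-valued 1-form)
    (sz : S)                            -- *ζ
    (hstar : ∀ b : Ω0, star2 (zw b) = sm0 sz b)
    (hLeib : ∀ (σ : S) (b : Ω0),
      dAW (sm0 σ b) = sm0' (dS σ) b + ((-1 : ℝ)) ^ (m - 2) • sm1 σ (dA0 b))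
    (hharm : dS sz = 0)                 -- ζ harmonic: d(*ζ) = 0, i.e. d^*ζ = 0
    (FA : Ω2) (B : Ω0)
    (hcf1 : FA + zw B = 0)              -- cone-flat: F_A + ζ B = 0
    (hcf2 : dA0 B = 0) :                -- cone-flat: d_A B = 0
    dAW (star2 FA) = 0 := by
  calc dAW (star2 FA) = -dAW (sm0 sz B) := by
        rw [eq_neg_of_add_eq_zero_left hcf1, map_neg, map_neg, hstar]
    _ = 0 := by simp [hLeib, hharm, hcf2]
end

section
/- Let M be a closed Riemann surface and ζ its volume form. For each Yang–Mills connection A on a principal G-bundle over M (so F_A = ζΦ with d_A Φ = 0), there exists a unique B ∈ Ω⁰(M, Ad P) such that (A,B) is a cone Yang–Mills solution, namely B = -Φ; moreover this pair (A,B) is cone-flat (F_A + ζB = 0 and d_A B = 0). -/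
open scoped RealInnerProductSpace

/-- **uniqueness of `B` over a closed Riemann surface.**

Abstract formulation over a closed oriented Riemannian 2-manifold `M` with volume form
`ζ`:

* `Ω0, Ω1, Ω2` model `Ω⁰(M, Ad P)`, `Ω¹(M, Ad P)`, `Ω²(M, Ad P)` with `L²` inner
  products; `dA0 = d_A` on sections with formal adjoint `dA0s = d_A^*`,
  `dA1s = d_A^*` on two-forms, `bk B η = [B, η]`;
* `zw B = ζ B` is wedging with the volume form and `zs = ζ^*` its adjoint; since `ζ` is
  the volume form of the surface, `ζ^*(ζ B) = B` (`hzs`);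
* `A` is a Yang–Mills connection: in two dimensions this means `F_A = ζ Φ` with
  `d_A Φ = 0`.

Then `B = -Φ` is the unique `B ∈ Ω⁰(M, Ad P)` such that `(A, B)` satisfies the cone
Yang–Mills equations, and in fact such a pair `(A, B)` is always cone-flat:
`F_A + ζ B = 0` and `d_A B = 0`. -/
theorem unique_cone_yang_mills_partner_on_surface
    {Ω0 Ω1 Ω2 : Type*}
    [NormedAddCommGroup Ω0] [InnerProductSpace ℝ Ω0]
    [NormedAddCommGroup Ω1] [InnerProductSpace ℝ Ω1]
    [AddCommGroup Ω2] [Module ℝ Ω2]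
    (dA0 : Ω0 →ₗ[ℝ] Ω1) (dA0s : Ω1 →ₗ[ℝ] Ω0)
    (hadj : ∀ (ξ : Ω0) (y : Ω1), ⟪dA0 ξ, y⟫ = ⟪ξ, dA0s y⟫)
    (dA1s : Ω2 →ₗ[ℝ] Ω1)
    (zw : Ω0 →ₗ[ℝ] Ω2) (zs : Ω2 →ₗ[ℝ] Ω0)
    (hzs : ∀ b : Ω0, zs (zw b) = b)        -- ζ^*(ζ b) = b for the volume form in 2d
    (bk : Ω0 →ₗ[ℝ] Ω1 →ₗ[ℝ] Ω1)
    (Φ : Ω0) (FA : Ω2)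
    (hYM : FA = zw Φ) (hΦ : dA0 Φ = 0) :    -- A Yang–Mills: F_A = ζΦ, d_AΦ = 0
    -- (A, -Φ) is a cone Yang–Mills solution ...
    ((dA1s (FA + zw (-Φ)) + bk (-Φ) (dA0 (-Φ)) = 0
        ∧ zs (FA + zw (-Φ)) + dA0s (dA0 (-Φ)) = 0)
    -- ... which is moreover cone-flat ...
      ∧ (FA + zw (-Φ) = 0 ∧ dA0 (-Φ) = 0))
    -- ... it is the unique such `B` ...
    ∧ (∀ B : Ω0,
        (dA1s (FA + zw B) + bk B (dA0 B) = 0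
          ∧ zs (FA + zw B) + dA0s (dA0 B) = 0) → B = -Φ)
    -- ... and every cone Yang–Mills partner of `A` gives a cone-flat pair.
    ∧ (∀ B : Ω0,
        (dA1s (FA + zw B) + bk B (dA0 B) = 0
          ∧ zs (FA + zw B) + dA0s (dA0 B) = 0) →
        (FA + zw B = 0 ∧ dA0 B = 0)) := by
  have key : ∀ B : Ω0, zs (FA + zw B) + dA0s (dA0 B) = 0 → B = -Φ := by
    intro B h2
    set C := Φ + B with hC
    have hdB : dA0 B = dA0 C := by simp [hC, map_add, hΦ]
    have hceq : C + dA0s (dA0 C) = 0 := by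
      have : zs (FA + zw B) = C := by
        rw [hYM, ← map_add, hzs]
      rw [this, hdB] at h2
      exact h2
    have hinner : ⟪C, C⟫ + ⟪dA0 C, dA0 C⟫ = 0 := by
      have := congrArg (fun x => ⟪C, x⟫) hceq
      simpa [inner_add_right, ← hadj C (dA0 C), real_inner_comm] using this
    have hC0 : C = 0 := by
      have h1 : (0:ℝ) ≤ ⟪C, C⟫ := real_inner_self_nonneg
      have h2' : (0:ℝ) ≤ ⟪dA0 C, dA0 C⟫ := real_inner_self_nonneg
      have : ⟪C, C⟫ = 0 := by linarith
      exact inner_self_eq_zero.mp this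
    exact (neg_eq_of_add_eq_zero_right (hC ▸ hC0)).symm
  have hflat : ∀ B : Ω0, B = -Φ → (FA + zw B = 0 ∧ dA0 B = 0) := by
    intro B hB
    subst hB
    constructor
    · rw [hYM, ← map_add]; simp
    · simp [hΦ]
  have hne : FA + zw (-Φ) = 0 ∧ dA0 (-Φ) = 0 := hflat _ rfl
  refine ⟨⟨⟨?_, ?_⟩, hne⟩, fun B h => key B h.2, fun B h => hflat B (key B h.2)⟩
  · rw [hne.1, hne.2]; simp
  · rw [hne.1, hne.2]; simp
end

section
/- Suppose M is a closed Riemann surface, ζ is a non-exact (as de Rham class, non-trivial) closed two-form on M, and the structure group is abelian. Then every cone Yang–Mills solution (A,B) is cone-flat: F_A + ζB = 0 and dB = 0. -/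
open scoped RealInnerProductSpace

/-- **abelian cone Yang–Mills solutions on a closed surface, `ζ` non-exact.**

Abstract formulation over a closed oriented Riemannian 2-manifold `M` with volume form
`ω`, abelian structure group (so `Ad P`-valued forms are ordinary forms and all
brackets vanish):

* `Ω0, Ω1, Ω2` are the spaces of 0-, 1-, 2-forms with `L²` inner products, `d0, d1`
  the exterior derivative with formal adjoints `d0s, d1s`;
* `one` is the constant function `1` (so `d0 one = 0`);
* `zmul B = ζ B` is multiplication by the closed two-form `ζ` (so `ζ = zmul one`), and
  `zs = ζ^*` its adjoint;
* `hconst` is the Hodge-theoretic fact on a closed surface that a coclosed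
  two-form is a constant multiple of the volume form, and `hexact` the fact that a
  two-form on the closed surface is exact iff it integrates to zero, i.e. iff it is
  `L²`-orthogonal to the volume form (`∫ x = ⟪x, ω⟫` since `*ω = 1`);
* `ζ` is non-exact: `¬ ∃ α, dα = ζ`.

Then every solution `(A, B)` of the (abelian) cone Yang–Mills equations
`d^*(F_A + ζB) = 0` and `ζ^*(F_A + ζB) + d^*dB = 0` is cone-flat:
`F_A + ζ B = 0` and `dB = 0`. -/
theorem abelian_cone_yang_mills_on_surface_cone_flat
    {Ω0 Ω1 Ω2 : Type*}
    [NormedAddCommGroup Ω0] [InnerProductSpace ℝ Ω0]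
    [NormedAddCommGroup Ω1] [InnerProductSpace ℝ Ω1]
    [NormedAddCommGroup Ω2] [InnerProductSpace ℝ Ω2]
    (d0 : Ω0 →ₗ[ℝ] Ω1) (d1 : Ω1 →ₗ[ℝ] Ω2)
    (d0s : Ω1 →ₗ[ℝ] Ω0) (d1s : Ω2 →ₗ[ℝ] Ω1)
    (hadj0 : ∀ (φ : Ω0) (y : Ω1), ⟪d0 φ, y⟫ = ⟪φ, d0s y⟫)
    (hadj1 : ∀ (η : Ω1) (x : Ω2), ⟪d1 η, x⟫ = ⟪η, d1s x⟫)
    (ω : Ω2)                                   -- the volume form of M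
    (one : Ω0) (hone : d0 one = 0)             -- the constant function 1
    (hconst : ∀ x : Ω2, d1s x = 0 → ∃ c : ℝ, x = c • ω)
    (hexact : ∀ x : Ω2, (∃ α : Ω1, d1 α = x) ↔ ⟪x, ω⟫ = 0)
    (zmul : Ω0 →ₗ[ℝ] Ω2) (zs : Ω2 →ₗ[ℝ] Ω0)   -- multiplication by ζ, and ζ^*
    (hzadj : ∀ (φ : Ω0) (x : Ω2), ⟪zmul φ, x⟫ = ⟪φ, zs x⟫)
    (hnonexact : ¬ ∃ α : Ω1, d1 α = zmul one)  -- ζ is not exact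
    (FA : Ω2) (B : Ω0)                          -- curvature F_A and the section B
    (heq1 : d1s (FA + zmul B) = 0)              -- d^*(F_A + ζB) = 0
    (heq2 : zs (FA + zmul B) + d0s (d0 B) = 0)  -- ζ^*(F_A + ζB) + d^*dB = 0
    :
    FA + zmul B = 0 ∧ d0 B = 0 := by
  obtain ⟨c, hc⟩ := hconst _ heq1
  have hzω : ⟪zmul one, ω⟫ ≠ 0 := fun h => hnonexact ((hexact _).mpr h)
  -- pair heq2 with `one`
  have h1 : ⟪one, zs (FA + zmul B) + d0s (d0 B)⟫ = 0 := by rw [heq2, inner_zero_right]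
  have h2 : ⟪one, zs (FA + zmul B)⟫ = c * ⟪zmul one, ω⟫ := by
    rw [← hzadj, hc, real_inner_smul_right]
  have h3 : ⟪one, d0s (d0 B)⟫ = 0 := by
    rw [← hadj0, hone, inner_zero_left]
  rw [inner_add_right, h2, h3, add_zero] at h1
  have hc0 : c = 0 := by
    rcases mul_eq_zero.mp h1 with h | h
    · exact h
    · exact absurd h hzω
  have hflat : FA + zmul B = 0 := by rw [hc, hc0, zero_smul]
  refine ⟨hflat, ?_⟩
  have h4 : d0s (d0 B) = 0 := by
    have := heq2
    rw [hflat, map_zero, zero_add] at this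
    exact this
  have h5 : ⟪d0 B, d0 B⟫ = 0 := by rw [hadj0, h4, inner_zero_right]
  exact inner_self_eq_zero.mp h5
end

section
/- Let M be an oriented Riemannian 3-manifold and ζ a closed two-form. If a pair (A,B) satisfies the duality condition F_A + ζB = ±*d_A B (which is equivalent to *_C ℱ_𝒜 = ∓ℱ_𝒜 for the cone curvature ℱ_𝒜 = (F_A + ζB) - θ d_A B), then (A,B) satisfies the cone Yang–Mills equations d_A^*(F_A+ζB) + [B, d_A B] = 0 and ζ^*(F_A+ζB) + d_A^* d_A B = 0. -/
/-- **the three-dimensional duality condition implies cone Yang–Mills.**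

Abstract formulation over an oriented Riemannian 3-manifold `(M³, g)` with closed
two-form `ζ`:

* `Ω0, Ω1, Ω2, Ω3` model `Ω⁰(M, Ad P)`, …, `Ω³(M, Ad P)`;
* `dA0, dA1, dA2` model the covariant derivative `d_A` in each degree, and
  `star1, star2, star3` the Hodge star (`** = 1` in three dimensions, `hss`);
* following `d_A^* = (-1)^k * d_A *` on `k`-forms in three dimensions,
  `dA2s x = * d_A * x` is `d_A^*` on two-forms and `dA1s y = - * d_A * y` is `d_A^*`
  on one-forms;
* `zw0 B = ζ B`, `zw1 η = ζ ∧ η` are wedging with `ζ`, and `zs2 = ζ^* = * ζ *` on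
  two-forms is the adjoint of `ζ ∧ ·`;
* `bk1 b η = [b, η]`, `bk2 b x = [b, x]` are the brackets of a section with a
  one-form/two-form; `hdd` is the identity `d_A d_A B = [F_A, B]`, `hBianchi` the
  Bianchi identity `d_A F_A = 0`, `hLeib` the Leibniz rule `d_A(ζB) = ζ ∧ d_A B`
  (using `dζ = 0`), `hstarbk` compatibility of `*` with the bracket, and `hzbb` the
  identity `[*(ζ b), b] = (*ζ)[b, b] = 0`.

If the pair `(A, B)` satisfies the duality condition `F_A + ζB = ± * d_A B`
(equivalently `*_C ℱ_𝒜 = ∓ ℱ_𝒜` for the cone curvature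
`ℱ_𝒜 = (F_A + ζB) - θ d_A B`), then `(A, B)` satisfies the cone Yang–Mills equations
`d_A^*(F_A + ζB) + [B, d_A B] = 0` and `ζ^*(F_A + ζB) + d_A^* d_A B = 0`. -/
theorem duality_implies_cone_yang_mills_3d
    {Ω0 Ω1 Ω2 Ω3 : Type*}
    [AddCommGroup Ω0] [Module ℝ Ω0] [AddCommGroup Ω1] [Module ℝ Ω1]
    [AddCommGroup Ω2] [Module ℝ Ω2] [AddCommGroup Ω3] [Module ℝ Ω3]
    (dA0 : Ω0 →ₗ[ℝ] Ω1) (dA1 : Ω1 →ₗ[ℝ] Ω2) (dA2 : Ω2 →ₗ[ℝ] Ω3)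
    (star1 : Ω1 →ₗ[ℝ] Ω2) (star2 : Ω2 →ₗ[ℝ] Ω1) (star3 : Ω3 →ₗ[ℝ] Ω0)
    (hss1 : ∀ η : Ω1, star2 (star1 η) = η)
    (hss2 : ∀ x : Ω2, star1 (star2 x) = x)
    (dA2s : Ω2 →ₗ[ℝ] Ω1)
    (hdA2s : ∀ x : Ω2, dA2s x = star2 (dA1 (star2 x)))      -- d_A^* on 2-forms
    (dA1s : Ω1 →ₗ[ℝ] Ω0)
    (hdA1s : ∀ y : Ω1, dA1s y = - star3 (dA2 (star1 y)))    -- d_A^* on 1-forms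
    (zw0 : Ω0 →ₗ[ℝ] Ω2) (zw1 : Ω1 →ₗ[ℝ] Ω3)                 -- ζ ∧ ·
    (zs2 : Ω2 →ₗ[ℝ] Ω0)
    (hzs2 : ∀ x : Ω2, zs2 x = star3 (zw1 (star2 x)))         -- ζ^* on 2-forms
    (bk1 : Ω0 →ₗ[ℝ] Ω1 →ₗ[ℝ] Ω1) (bk2 : Ω0 →ₗ[ℝ] Ω2 →ₗ[ℝ] Ω2)
    (FA : Ω2) (B : Ω0)
    (hdd : ∀ b : Ω0, dA1 (dA0 b) = - bk2 b FA)               -- d_A d_A b = [F_A, b]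
    (hBianchi : dA2 FA = 0)                                   -- Bianchi identity
    (hLeib : ∀ b : Ω0, dA2 (zw0 b) = zw1 (dA0 b))            -- d_A(ζ b) = ζ ∧ d_A b
    (hstarbk : ∀ (b : Ω0) (x : Ω2), star2 (bk2 b x) = bk1 b (star2 x))
    (hzbb : ∀ b : Ω0, bk1 b (star2 (zw0 b)) = 0)             -- [*(ζ b), b] = 0
    -- the duality condition F_A + ζ B = ± * d_A B :
    (hdual : FA + zw0 B = star1 (dA0 B) ∨ FA + zw0 B = - star1 (dA0 B)) :
    dA2s (FA + zw0 B) + bk1 B (dA0 B) = 0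
      ∧ zs2 (FA + zw0 B) + dA1s (dA0 B) = 0 := by
  obtain ⟨ε, hε, h⟩ : ∃ ε : ℝ, ε * ε = 1 ∧ FA + zw0 B = ε • star1 (dA0 B) := by
    rcases hdual with h | h
    · exact ⟨1, by norm_num, by simpa using h⟩
    · exact ⟨-1, by norm_num, by simpa using h⟩
  have hs : star2 (FA + zw0 B) = ε • dA0 B := by
    rw [h, map_smul, hss1]
  have hsF : star2 FA = ε • dA0 B - star2 (zw0 B) := by
    rw [← hs, map_add]; abel
  have hstar1 : star1 (dA0 B) = ε • (FA + zw0 B) := by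
    rw [h, smul_smul, hε, one_smul]
  constructor
  · rw [hdA2s, hs, map_smul, hdd, map_smul, map_neg, hstarbk, hsF, map_sub,
      hzbb, sub_zero, map_smul, smul_neg, smul_smul, hε, one_smul]
    abel
  · rw [hzs2, hs, map_smul, map_smul, ← hLeib, hdA1s, hstar1, map_smul, map_add,
      hBianchi, zero_add, map_smul]
    abel
end

section
/- Let M be a compact oriented Riemannian 3-manifold (possibly with boundary) and ζ a closed two-form. Then the cone Yang–Mills functional satisfies the bound ‖F_A + ζB‖² + ‖d_A B‖² ≥ ±2 c_G ∫_M tr[(F_A + ζB) ∧ d_A B], with equality if and only if F_A + ζB = ±*d_A B. Moreover the bounding integral is a boundary term: c_G ∫_M tr[(F_A + ζB) ∧ d_A B] = c_G ∫_{∂M} tr[F_A B + (1/2) ζ B²]. -/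
open scoped RealInnerProductSpace

/-- **three-dimensional bound and boundary term.**

Abstract formulation over a compact oriented Riemannian 3-manifold `(M³, g)` (possibly
with boundary), with `G ⊂ SO(N)` and Killing form `c_G · tr`, and a closed two-form
`ζ`:

* `Ω0, Ω1, Ω2, Ω3` model the `Ad P`-valued forms, `Ω1, Ω2` carrying the `L²` inner
  products induced by `g` and the Killing form;
* `star1, star2` are the Hodge stars (inverse to each other in 3d, `hss`), and
  `trw x η = c_G ∫_M tr(x ∧ η)`, `trw3 y b = c_G ∫_M tr(y · b)` are the trace pairings;
  the `L²` inner products are `⟪x, y⟫ = c_G ∫ tr(x ∧ *y)` (`hinner2`, `hinner1`);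
* `bInt x b = c_G ∫_{∂M} tr(x · b)` is the boundary pairing, and `hStokes` is Stokes'
  theorem `∫_M tr(x ∧ d_A b) = ∫_{∂M} tr(x b) - ∫_M tr((d_A x) b)`;
* `dA0, dA2` are the covariant derivatives, `zw0 B = ζB`, `zw1 η = ζ ∧ η`;
  `hBianchi` is the Bianchi identity, `hLeib` is `d_A(ζB) = ζ ∧ d_A B` (`dζ = 0`) and
  `hsymm` is the symmetry `tr((ζ ∧ η) b) = tr((ζ b) ∧ η)`.

Then for either sign `s = ±1` the cone Yang–Mills functional satisfies
`‖F_A + ζB‖² + ‖d_A B‖² ≥ ± 2 c_G ∫_M tr[(F_A + ζB) ∧ d_A B]`, with equality iff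
`F_A + ζB = ± * d_A B`; moreover the bounding integral is the boundary term
`c_G ∫_M tr[(F_A + ζB) ∧ d_A B] = c_G ∫_{∂M} tr[F_A B + ½ ζ B²]`. -/
theorem cone_yang_mills_bound_and_boundary_term_3d
    {Ω0 Ω1 Ω2 Ω3 : Type*}
    [AddCommGroup Ω0] [Module ℝ Ω0]
    [NormedAddCommGroup Ω1] [InnerProductSpace ℝ Ω1]
    [NormedAddCommGroup Ω2] [InnerProductSpace ℝ Ω2]
    [AddCommGroup Ω3] [Module ℝ Ω3]
    (star1 : Ω1 →ₗ[ℝ] Ω2) (star2 : Ω2 →ₗ[ℝ] Ω1)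
    (hss1 : ∀ η : Ω1, star2 (star1 η) = η)
    (hss2 : ∀ x : Ω2, star1 (star2 x) = x)
    (trw : Ω2 →ₗ[ℝ] Ω1 →ₗ[ℝ] ℝ)         -- (x, η) ↦ c_G ∫_M tr(x ∧ η)
    (trw3 : Ω3 →ₗ[ℝ] Ω0 →ₗ[ℝ] ℝ)        -- (y, b) ↦ c_G ∫_M tr(y b)
    (hinner2 : ∀ x y : Ω2, ⟪x, y⟫ = trw x (star2 y))
    (hinner1 : ∀ η ξ : Ω1, ⟪η, ξ⟫ = trw (star1 ξ) η)
    (bInt : Ω2 →ₗ[ℝ] Ω0 →ₗ[ℝ] ℝ)        -- (x, b) ↦ c_G ∫_{∂M} tr(x b)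
    (dA0 : Ω0 →ₗ[ℝ] Ω1) (dA2 : Ω2 →ₗ[ℝ] Ω3)
    (hStokes : ∀ (x : Ω2) (b : Ω0), trw x (dA0 b) = bInt x b - trw3 (dA2 x) b)
    (zw0 : Ω0 →ₗ[ℝ] Ω2) (zw1 : Ω1 →ₗ[ℝ] Ω3)
    (hsymm : ∀ (η : Ω1) (b : Ω0), trw3 (zw1 η) b = trw (zw0 b) η)
    (FA : Ω2) (B : Ω0)
    (hBianchi : dA2 FA = 0)
    (hLeib : dA2 (zw0 B) = zw1 (dA0 B)) :
    (∀ s : ℝ, (s = 1 ∨ s = -1) →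
      (‖FA + zw0 B‖ ^ 2 + ‖dA0 B‖ ^ 2 ≥ s * (2 * trw (FA + zw0 B) (dA0 B))
        ∧ (‖FA + zw0 B‖ ^ 2 + ‖dA0 B‖ ^ 2 = s * (2 * trw (FA + zw0 B) (dA0 B))
            ↔ FA + zw0 B = s • star1 (dA0 B))))
    ∧ trw (FA + zw0 B) (dA0 B) = bInt FA B + (1 / 2) * bInt (zw0 B) B := by

  set X := FA + zw0 B with hX
  set η := dA0 B with he
  have hkey : ⟪X, star1 η⟫ = trw X η := by rw [hinner2, hss1]
  have hnη : ‖star1 η‖ ^ 2 = ‖η‖ ^ 2 := by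
    have h1 : ⟪star1 η, star1 η⟫ = trw (star1 η) η := by rw [hinner2, hss1]
    have h2 : ⟪η, η⟫ = trw (star1 η) η := hinner1 η η
    have := h1.trans h2.symm
    rw [real_inner_self_eq_norm_sq, real_inner_self_eq_norm_sq] at this
    simpa [sq] using this
  constructor
  · intro s hs
    have hs2 : s * s = 1 := by rcases hs with h | h <;> simp [h]
    have expand : ‖X - s • star1 η‖ ^ 2
        = ‖X‖ ^ 2 + ‖η‖ ^ 2 - s * (2 * trw X η) := by
      have h1 : ‖X - s • star1 η‖ ^ 2
          = ‖X‖ ^ 2 - 2 * ⟪X, s • star1 η⟫ + ‖s • star1 η‖ ^ 2 := by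
        simpa [sq] using norm_sub_sq_real X (s • star1 η)
      have h2 : ⟪X, s • star1 η⟫ = s * trw X η := by
        rw [real_inner_smul_right, hkey]
      have h3 : ‖s • star1 η‖ ^ 2 = ‖η‖ ^ 2 := by
        rw [norm_smul, mul_pow, ← hnη]
        have : ‖s‖ ^ 2 = 1 := by
          rw [Real.norm_eq_abs, sq_abs]; simpa [sq] using hs2
        rw [this, one_mul]
      rw [h1, h2, h3]; ring
    constructor
    · nlinarith [sq_nonneg (‖X - s • star1 η‖), expand]
    · constructor
      · intro hEq
        have : ‖X - s • star1 η‖ ^ 2 = 0 := by rw [expand, hEq]; ring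
        have := pow_eq_zero_iff (n := 2) (by norm_num) |>.mp this
        have := norm_eq_zero.mp this
        exact sub_eq_zero.mp this
      · intro hEq
        have : ‖X - s • star1 η‖ ^ 2 = 0 := by
          rw [sub_eq_zero.mpr hEq]; simp
        rw [expand] at this; linarith
  · have hdX : dA2 X = zw1 η := by rw [hX, map_add, hBianchi, hLeib, zero_add]
    have h1 : trw X η = bInt X B - trw3 (zw1 η) B := by
      rw [← hdX]; exact hStokes X B
    have h2 : trw (zw0 B) η = bInt (zw0 B) B - trw3 (zw1 η) B := by
      have := hStokes (zw0 B) B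
      rw [hLeib] at this; exact this
    have h3 : trw3 (zw1 η) B = trw (zw0 B) η := hsymm η B
    have h4 : trw3 (zw1 η) B = (1 / 2) * bInt (zw0 B) B := by
      rw [h3] at h2 ⊢; linarith
    have hbX : bInt X B = bInt FA B + bInt (zw0 B) B := by
      rw [hX, map_add]; simp
    rw [h1, h4, hbX]; ring
end

section
/- Let Σ be a Riemann surface, ζ its volume form normalized to total volume one, A' a non-flat Yang–Mills connection on Σ with F_{A'} = ζΦ and d_{A'}Φ = 0, and π: M → Σ the circle bundle with Euler class ζ and global angular one-form θ (dθ = π*ζ). For any c ∈ ℝ, set A = π*A' + cθΦ and B = -(1+c)Φ on the pullback bundle π*(Ad P). Then (A,B) is cone-flat with respect to π*ζ: F_A = (1+c)ζΦ = -ζB and d_A B = 0; but with respect to the volume form ζ∧θ on M, d_A^* F_A = (1+c)θΦ, so A is not a Yang–Mills connection whenever c ≠ -1. -/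
/-- **a cone-flat pair whose connection is not Yang–Mills.**

Abstract formulation of the example on the circle bundle `π : M → Σ` with Euler class
the (normalized) volume form `ζ` of the Riemann surface `Σ` and global angular one-form
`θ` (`dθ = π*ζ`), volume form `ζ ∧ θ` on `M`:

* `V0, V1, V2` model the `Ad P`-valued 0-, 1-, 2-forms on `M` (pullback bundle
  `π*(Ad P)`);
* `A'` is (the pullback of) a Yang–Mills connection on `Σ` with `F_{A'} = ζΦ` and
  `d_{A'}Φ = 0`; `Curv` is the curvature map `A ↦ F_A` and `hCurvExp` its expansion
  `F_{A' + η} = F_{A'} + d_{A'}η + η ∧ η`;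
* `Dcov`/`Dcov1` are the covariant derivatives `d_A` on sections/one-forms for a
  connection `A`, with expansions `hcov`, `hcov1` around `A'`; `D0, D1` are `d_{A'}`;
* `tm0 b = θb`, `tm1 η = θ ∧ η`, `zm0 b = ζb` are multiplication by `θ` and `ζ`;
  `hLeib` is the Leibniz rule `d_{A'}(θ b) = ζ b - θ ∧ d_{A'} b` (using `dθ = ζ`),
  `hθθ` is `θ ∧ θ = 0`, `hbr` is `[θ b, b'] = θ [b, b']`, `halt` is `[b, b] = 0`;
* `s2` is the Hodge star on two-forms of `M` for the metric with volume form `ζ ∧ θ`,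
  so `*(ζ b) = θ b` (`hs2`), and `DstarA = d_A^* = * d_A *` on two-forms (3d);
* `A := A' + cθΦ` and `B := -(1+c)Φ`.

Conclusions: `F_A = (1+c)ζΦ = -ζB` and `d_A B = 0` (the pair `(A, B)` is cone-flat
with respect to `π*ζ`), while `d_A^* F_A = (1+c)θΦ`; hence if `A'` is non-flat and
`c ≠ -1` then `d_A^* F_A ≠ 0` and `A` is not a Yang–Mills connection on `M`. -/
theorem cone_flat_pair_with_non_yang_mills_connection
    {V0 V1 V2 : Type*}
    [AddCommGroup V0] [Module ℝ V0] [AddCommGroup V1] [Module ℝ V1]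
    [AddCommGroup V2] [Module ℝ V2]
    (Curv : V1 → V2)                                  -- A ↦ F_A
    (D0 : V0 →ₗ[ℝ] V1) (D1 : V1 →ₗ[ℝ] V2)            -- d_{A'} on sections/one-forms
    (w : V1 →ₗ[ℝ] V1 →ₗ[ℝ] V2)                        -- wedge product η ∧ ξ
    (br0 : V0 →ₗ[ℝ] V0 →ₗ[ℝ] V0)                      -- bracket [b, b']
    (br1 : V1 →ₗ[ℝ] V0 →ₗ[ℝ] V1)                      -- bracket [η, b]
    (Dcov : V1 → V0 →ₗ[ℝ] V1)                         -- A ↦ d_A on sections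
    (Dcov1 : V1 → V1 →ₗ[ℝ] V2)                        -- A ↦ d_A on one-forms
    (A' : V1)
    (hCurvExp : ∀ η : V1, Curv (A' + η) = Curv A' + D1 η + w η η)
    (hcov : ∀ (η : V1) (b : V0), Dcov (A' + η) b = D0 b + br1 η b)
    (hcov1 : ∀ η x : V1, Dcov1 (A' + η) x = D1 x + w η x + w x η)
    (tm0 : V0 →ₗ[ℝ] V1) (tm1 : V1 →ₗ[ℝ] V2)           -- θ · and θ ∧ ·
    (zm0 : V0 →ₗ[ℝ] V2)                                -- ζ ·
    (hLeib : ∀ b : V0, D1 (tm0 b) = zm0 b - tm1 (D0 b)) -- dθ = ζ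
    (hθθ : ∀ b b' : V0, w (tm0 b) (tm0 b') = 0)         -- θ ∧ θ = 0
    (hbr : ∀ b b' : V0, br1 (tm0 b) b' = tm0 (br0 b b'))
    (halt : ∀ b : V0, br0 b b = 0)
    (htm0 : Function.Injective tm0)                     -- θ is nowhere vanishing
    (s2 : V2 →ₗ[ℝ] V1)                                  -- Hodge star on 2-forms of M
    (hs2 : ∀ b : V0, s2 (zm0 b) = tm0 b)                -- *(ζ b) = θ b  (vol = ζ ∧ θ)
    (Φ : V0) (c : ℝ)
    (hYM : Curv A' = zm0 Φ) (hΦ : D0 Φ = 0)             -- A' Yang–Mills on Σ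
    (hnonflat : Curv A' ≠ 0)                             -- A' non-flat
    (DstarA : V2 → V1)                                   -- d_A^* = * d_A * for A = A' + cθΦ
    (hDstar : ∀ x : V2, DstarA x = s2 (Dcov1 (A' + c • tm0 Φ) (s2 x))) :
    -- with A = A' + cθΦ and B = -(1+c)Φ :
    Curv (A' + c • tm0 Φ) = (1 + c) • zm0 Φ
    ∧ Curv (A' + c • tm0 Φ) + zm0 (-(1 + c) • Φ) = 0
    ∧ Dcov (A' + c • tm0 Φ) (-(1 + c) • Φ) = 0
    ∧ DstarA (Curv (A' + c • tm0 Φ)) = (1 + c) • tm0 Φ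
    ∧ (c ≠ -1 → DstarA (Curv (A' + c • tm0 Φ)) ≠ 0) := by
  have hΦne : Φ ≠ 0 := by
    intro h; apply hnonflat; rw [hYM, h, map_zero]
  have hC : Curv (A' + c • tm0 Φ) = (1 + c) • zm0 Φ := by
    rw [hCurvExp, hYM]
    simp [hLeib, hΦ, hθθ, map_smul, LinearMap.smul_apply]
    module
  have hD : Dcov1 (A' + c • tm0 Φ) (tm0 Φ) = zm0 Φ := by
    rw [hcov1, hLeib, hΦ]
    simp [hθθ, map_smul, LinearMap.smul_apply]
  have hDs : DstarA (Curv (A' + c • tm0 Φ)) = (1 + c) • tm0 Φ := by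
    rw [hC, hDstar, map_smul, hs2, map_smul, hD, map_smul, hs2]
  refine ⟨hC, ?_, ?_, hDs, ?_⟩
  · rw [hC, map_smul]; module
  · rw [hcov]
    simp [hΦ, map_smul, LinearMap.smul_apply, hbr, halt]
  · intro hc h
    rw [hDs] at h
    have h1c : (1 : ℝ) + c ≠ 0 := by
      intro h'; apply hc; linarith
    have h2 : tm0 Φ = 0 := (smul_eq_zero.mp h).resolve_left h1c
    exact hΦne (htm0 (by rw [h2, map_zero]))
end

section
/- On the 4-torus M = T⁴ = ℝ⁴/2πℤ⁴ with metric g = (dx₁)² + (dx₂)² + f⁻¹(dx₃)² + f(dx₄)², where f = (3 + 2 sin 2x₂ cos x₃)/(1 - (1/2) sin 2x₂ cos x₃), and ζ = dx₁∧dx₂ + dx₃∧dx₄, the U(1) connection A = dy + (1/2π)x₁ dx₃ + (1/4π) sin 2x₂ sin x₃ dx₁ has curvature F_A = -(1/2π) cos 2x₂ sin x₃ dx₁∧dx₂ + (1/2π)(1 - (1/2) sin 2x₂ cos x₃) dx₁∧dx₃ satisfying the abelian Yang–Mills equation d*F_A = 0, yet there exists no function B on T⁴ such that (A,B) is a cone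 Yang–Mills solution with respect to ζ. -/
/-! **Statement 12 (a Yang–Mills `U(1)` connection on `T⁴` with no cone Yang–Mills
partner `B`).**

We work on `T⁴ = ℝ⁴/2πℤ⁴`, modeled by `2π`-periodic functions on `X = ℝ⁴`
(coordinates `x 0, x 1, x 2, x 3` for `x₁, x₂, x₃, x₄`), with the metric
`g = (dx₁)² + (dx₂)² + f⁻¹(dx₃)² + f (dx₄)²`,
`f = (3 + 2 sin 2x₂ cos x₃)/(1 - (1/2) sin 2x₂ cos x₃)`,
and the closed two-form `ζ = dx₁∧dx₂ + dx₃∧dx₄`.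

Forms are recorded by their coefficient functions; `d0, d1, d2, d3` are the exterior
derivatives, `star1, star2, star3` the Hodge stars of `g` (volume form `dx₁₂₃₄` since
`det g = 1`), `d2s = -*d*` and `d1s = -*d*` the codifferentials on two- and one-forms,
`zmul B = ζ B`, and `zs = ζ^* = *(ζ ∧ *·)` the adjoint of wedging with `ζ`.

`Aloc = (1/2π) x₁ dx₃ + (1/4π) sin 2x₂ sin x₃ dx₁` is the local expression of the
`U(1)` connection `A = dy + Aloc` (fiber coordinate `y ~ y + 2πn₅ - n₁x₃`), whose
curvature is
`F_A = -(1/2π) cos 2x₂ sin x₃ dx₁∧dx₂ + (1/2π)(1 - (1/2) sin 2x₂ cos x₃) dx₁∧dx₃`.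

The theorem: `F_A = d Aloc`, `F_A` satisfies the abelian Yang–Mills equation
`d * F_A = 0`, and yet there is no (smooth, periodic) function `B` on `T⁴` such that
`(A, B)` satisfies the cone Yang–Mills equations
`d^*(F_A + ζB) = 0` and `ζ^*(F_A + ζB) + d^*dB = 0`. -/

namespace ConeYMT4

noncomputable section

open Real

/-- Points of `ℝ⁴`, the universal cover of `T⁴ = ℝ⁴/2πℤ⁴`. -/
abbrev X : Type := Fin 4 → ℝ

/-- Functions on `ℝ⁴` (0-forms). -/
abbrev F0 : Type := X → ℝ

/-- `i`-th partial derivative. -/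
def pd (i : Fin 4) (u : F0) : F0 := fun x => fderiv ℝ u x (Pi.single i 1)

/-- One-forms `a1 dx₁ + a2 dx₂ + a3 dx₃ + a4 dx₄`. -/
structure Form1 where
  a1 : F0
  a2 : F0
  a3 : F0
  a4 : F0

/-- Two-forms `Σ a_{ij} dxᵢ∧dxⱼ`, `i < j`. -/
structure Form2 where
  a12 : F0
  a13 : F0
  a14 : F0
  a23 : F0
  a24 : F0
  a34 : F0

/-- Three-forms `Σ a_{ijk} dxᵢ∧dxⱼ∧dx_k`, `i < j < k`. -/
structure Form3 where
  a123 : F0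
  a124 : F0
  a134 : F0
  a234 : F0

instance : Zero Form1 := ⟨⟨0, 0, 0, 0⟩⟩
instance : Zero Form3 := ⟨⟨0, 0, 0, 0⟩⟩
instance : Add Form2 :=
  ⟨fun α β => ⟨α.a12 + β.a12, α.a13 + β.a13, α.a14 + β.a14,
               α.a23 + β.a23, α.a24 + β.a24, α.a34 + β.a34⟩⟩

/-- Exterior derivative on functions. -/
def d0 (u : F0) : Form1 := ⟨pd 0 u, pd 1 u, pd 2 u, pd 3 u⟩

/-- Exterior derivative on one-forms. -/
def d1 (η : Form1) : Form2 :=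
  ⟨pd 0 η.a2 - pd 1 η.a1, pd 0 η.a3 - pd 2 η.a1, pd 0 η.a4 - pd 3 η.a1,
   pd 1 η.a3 - pd 2 η.a2, pd 1 η.a4 - pd 3 η.a2, pd 2 η.a4 - pd 3 η.a3⟩

/-- Exterior derivative on two-forms. -/
def d2 (ω : Form2) : Form3 :=
  ⟨pd 0 ω.a23 - pd 1 ω.a13 + pd 2 ω.a12,
   pd 0 ω.a24 - pd 1 ω.a14 + pd 3 ω.a12,
   pd 0 ω.a34 - pd 2 ω.a14 + pd 3 ω.a13,
   pd 1 ω.a34 - pd 2 ω.a24 + pd 3 ω.a23⟩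

/-- Exterior derivative on three-forms (coefficient of `dx₁∧dx₂∧dx₃∧dx₄`). -/
def d3 (τ : Form3) : F0 :=
  pd 0 τ.a234 - pd 1 τ.a134 + pd 2 τ.a124 - pd 3 τ.a123

/-- The conformal factor `f` of the metric. -/
def fmet : F0 := fun x =>
  (3 + 2 * sin (2 * x 1) * cos (x 2)) / (1 - (1 / 2) * sin (2 * x 1) * cos (x 2))

/-- Hodge star on one-forms for `g = diag(1, 1, f⁻¹, f)`, volume form `dx₁₂₃₄`. -/
def star1 (η : Form1) : Form3 :=
  ⟨-(η.a4 / fmet), fmet * η.a3, -η.a2, η.a1⟩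

/-- Hodge star on two-forms. -/
def star2 (ω : Form2) : Form2 :=
  ⟨ω.a34, -(ω.a24 / fmet), fmet * ω.a23, ω.a14 / fmet, -(fmet * ω.a13), ω.a12⟩

/-- Hodge star on three-forms. -/
def star3 (τ : Form3) : Form1 :=
  ⟨-τ.a234, τ.a134, -(τ.a124 / fmet), fmet * τ.a123⟩

/-- Codifferential `d^* = -*d*` on two-forms (`m = 4`, `k = 2`). -/
def d2s (ω : Form2) : Form1 :=
  let ξ := star3 (d2 (star2 ω))
  ⟨-ξ.a1, -ξ.a2, -ξ.a3, -ξ.a4⟩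

/-- Codifferential `d^* = -*d*` on one-forms (`m = 4`, `k = 1`; `* : Ω⁴ ≃ Ω⁰` is the
identity in these coordinates). -/
def d1s (η : Form1) : F0 := -(d3 (star1 η))

/-- The closed two-form `ζ = dx₁∧dx₂ + dx₃∧dx₄`. -/
def zeta : Form2 := ⟨1, 0, 0, 0, 0, 1⟩

/-- Multiplication of a function by `ζ`: `B ↦ ζ B`. -/
def zmul (B : F0) : Form2 := ⟨B, 0, 0, 0, 0, B⟩

/-- Wedge of two two-forms (coefficient of the volume form). -/
def w22 (α β : Form2) : F0 :=
  α.a12 * β.a34 - α.a13 * β.a24 + α.a14 * β.a23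
    + α.a23 * β.a14 - α.a24 * β.a13 + α.a34 * β.a12

/-- `ζ^* = *(ζ ∧ *·) : Ω² → Ω⁰`, the adjoint of wedging with `ζ`. -/
def zs (ω : Form2) : F0 := w22 zeta (star2 ω)

/-- The local connection one-form
`Aloc = (1/4π) sin 2x₂ sin x₃ dx₁ + (1/2π) x₁ dx₃` (so that `A = dy + Aloc`). -/
def Aloc : Form1 :=
  ⟨fun x => (1 / (4 * π)) * sin (2 * x 1) * sin (x 2), 0,
   fun x => (1 / (2 * π)) * x 0, 0⟩

/-- The curvature
`F_A = -(1/2π) cos 2x₂ sin x₃ dx₁∧dx₂ + (1/2π)(1 - (1/2) sin 2x₂ cos x₃) dx₁∧dx₃`. -/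
def FA : Form2 :=
  ⟨fun x => -(1 / (2 * π)) * cos (2 * x 1) * sin (x 2),
   fun x => (1 / (2 * π)) * (1 - (1 / 2) * sin (2 * x 1) * cos (x 2)),
   0, 0, 0, 0⟩

/-- `2π`-periodicity in each coordinate: descends to `T⁴ = ℝ⁴/2πℤ⁴`. -/
def Periodic4 (u : F0) : Prop :=
  ∀ (x : X) (i : Fin 4), u (Function.update x i (x i + 2 * π)) = u x

/-! ### Auxiliary lemmas -/

private lemma Form1.ext' {a b : Form1} (h1 : a.a1 = b.a1) (h2 : a.a2 = b.a2)
    (h3 : a.a3 = b.a3) (h4 : a.a4 = b.a4) : a = b := by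
  cases a; cases b; simp_all

private lemma Form2.ext' {a b : Form2} (h1 : a.a12 = b.a12) (h2 : a.a13 = b.a13)
    (h3 : a.a14 = b.a14) (h4 : a.a23 = b.a23) (h5 : a.a24 = b.a24)
    (h6 : a.a34 = b.a34) : a = b := by
  cases a; cases b; simp_all

private lemma Form3.ext' {a b : Form3} (h1 : a.a123 = b.a123) (h2 : a.a124 = b.a124)
    (h3 : a.a134 = b.a134) (h4 : a.a234 = b.a234) : a = b := by
  cases a; cases b; simp_all

private def pr (i : Fin 4) : X →L[ℝ] ℝ := ContinuousLinearMap.proj i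

private lemma hx (i : Fin 4) (x : X) : HasFDerivAt (fun p : X => p i) (pr i) x :=
  (pr i).hasFDerivAt

private lemma pd_eval {u : F0} {x : X} {L : X →L[ℝ] ℝ}
    (h : HasFDerivAt u L x) (i : Fin 4) : pd i u x = L (Pi.single i 1) := by
  simp only [pd, h.fderiv]

private lemma pd_zero (i : Fin 4) : pd i (0 : F0) = 0 := by
  funext x
  rw [show pd i (0 : F0) x = (0 : X →L[ℝ] ℝ) (Pi.single i 1) from
    pd_eval (hasFDerivAt_const (0:ℝ) x) i]
  simp

private lemma pd_add {u v : F0} {x : X} (hu : DifferentiableAt ℝ u x)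
    (hv : DifferentiableAt ℝ v x) (i : Fin 4) :
    pd i (u + v) x = pd i u x + pd i v x := by
  simp only [pd]
  rw [show (u + v) = fun y => u y + v y from rfl, fderiv_fun_add hu hv]
  simp

/-- derivative facts for `Aloc.a1` -/
private lemma pdA1_1 (x : X) :
    pd 1 (fun p : X => 1 / (4 * π) * sin (2 * p 1) * sin (p 2)) x
      = 1 / (2 * π) * cos (2 * x 1) * sin (x 2) := by
  refine Eq.trans (pd_eval ((((hx 1 x).const_mul (2:ℝ)).sin.const_mul
    (1/(4*π))).mul ((hx 2 x).sin)) 1) ?_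
  simp [pr]
  field_simp
  ring

private lemma pdA1_2 (x : X) :
    pd 2 (fun p : X => 1 / (4 * π) * sin (2 * p 1) * sin (p 2)) x
      = 1 / (4 * π) * sin (2 * x 1) * cos (x 2) := by
  refine Eq.trans (pd_eval ((((hx 1 x).const_mul (2:ℝ)).sin.const_mul
    (1/(4*π))).mul ((hx 2 x).sin)) 2) ?_
  simp [pr]

private lemma pdA1_3 (x : X) :
    pd 3 (fun p : X => 1 / (4 * π) * sin (2 * p 1) * sin (p 2)) x = 0 := by
  refine Eq.trans (pd_eval ((((hx 1 x).const_mul (2:ℝ)).sin.const_mul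
    (1/(4*π))).mul ((hx 2 x).sin)) 3) ?_
  simp [pr]

private lemma pdA3_0 (x : X) :
    pd 0 (fun p : X => 1 / (2 * π) * p 0) x = 1 / (2 * π) := by
  refine Eq.trans (pd_eval ((hx 0 x).const_mul (1/(2*π))) 0) ?_
  simp [pr]

private lemma pdA3_1 (x : X) :
    pd 1 (fun p : X => 1 / (2 * π) * p 0) x = 0 := by
  refine Eq.trans (pd_eval ((hx 0 x).const_mul (1/(2*π))) 1) ?_
  simp [pr]

private lemma pdA3_3 (x : X) :
    pd 3 (fun p : X => 1 / (2 * π) * p 0) x = 0 := by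
  refine Eq.trans (pd_eval ((hx 0 x).const_mul (1/(2*π))) 3) ?_
  simp [pr]

/-- The metric-denominator is positive. -/
private lemma Dpos (x : X) : 0 < 1 - 1 / 2 * sin (2 * x 1) * cos (x 2) := by
  nlinarith [neg_one_le_sin (2 * x 1), sin_le_one (2 * x 1),
    neg_one_le_cos (x 2), cos_le_one (x 2)]

private lemma Npos (x : X) : 0 < 3 + 2 * sin (2 * x 1) * cos (x 2) := by
  nlinarith [neg_one_le_sin (2 * x 1), sin_le_one (2 * x 1),
    neg_one_le_cos (x 2), cos_le_one (x 2)]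

private lemma fmet_pos (x : X) : 0 < fmet x := by
  unfold fmet
  exact div_pos (Npos x) (Dpos x)

private lemma fmet_mul_a13 (x : X) :
    fmet x * FA.a13 x = 1 / (2 * π) * (3 + 2 * sin (2 * x 1) * cos (x 2)) := by
  have key : ∀ a b k : ℝ, b ≠ 0 → a / b * (k * b) = k * a := by
    intro a b k hb; field_simp
  exact key _ _ _ (Dpos x).ne'

/-- the simplified coefficient `-(f ⋅ (F_A)₁₃)`. -/
private def m : F0 := fun x => -(1 / (2 * π) * (3 + 2 * sin (2 * x 1) * cos (x 2)))

private lemma pdm_0 (x : X) : pd 0 m x = 0 := by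
  refine Eq.trans (pd_eval ((((hasFDerivAt_const (3:ℝ) x).add
    ((((hx 1 x).const_mul (2:ℝ)).sin.const_mul (2:ℝ)).mul
      ((hx 2 x).cos))).const_mul (1/(2*π))).neg) 0) ?_
  simp [pr]

private lemma pdm_2 (x : X) :
    pd 2 m x = 1 / π * sin (2 * x 1) * sin (x 2) := by
  refine Eq.trans (pd_eval ((((hasFDerivAt_const (3:ℝ) x).add
    ((((hx 1 x).const_mul (2:ℝ)).sin.const_mul (2:ℝ)).mul
      ((hx 2 x).cos))).const_mul (1/(2*π))).neg) 2) ?_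
  simp [pr]
  field_simp

private lemma pdF_0 (x : X) :
    pd 0 (fun p : X => -(1 / (2 * π)) * cos (2 * p 1) * sin (p 2)) x = 0 := by
  refine Eq.trans (pd_eval ((((hx 1 x).const_mul (2:ℝ)).cos.const_mul
    (-(1/(2*π)))).mul ((hx 2 x).sin)) 0) ?_
  simp [pr]

private lemma pdF_1 (x : X) :
    pd 1 (fun p : X => -(1 / (2 * π)) * cos (2 * p 1) * sin (p 2)) x
      = 1 / π * sin (2 * x 1) * sin (x 2) := by
  refine Eq.trans (pd_eval ((((hx 1 x).const_mul (2:ℝ)).cos.const_mul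
    (-(1/(2*π)))).mul ((hx 2 x).sin)) 1) ?_
  simp [pr]
  field_simp

private lemma add2_def (α β : Form2) : α + β =
    ⟨α.a12 + β.a12, α.a13 + β.a13, α.a14 + β.a14,
     α.a23 + β.a23, α.a24 + β.a24, α.a34 + β.a34⟩ := rfl

private lemma star2_FA : star2 FA = ⟨0, 0, 0, 0, m, FA.a12⟩ := by
  refine Form2.ext' ?_ ?_ ?_ ?_ ?_ ?_
  · rfl
  · funext x; show -((FA.a24 x) / fmet x) = 0; simp [FA]
  · funext x; show fmet x * FA.a23 x = 0; simp [FA]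
  · funext x; show FA.a14 x / fmet x = 0; simp [FA]
  · funext x; show -(fmet x * FA.a13 x) = m x
    rw [fmet_mul_a13]; rfl
  · rfl

private lemma star2_sum (B : F0) :
    star2 (FA + zmul B) = ⟨B, 0, 0, 0, m, FA.a12 + B⟩ := by
  rw [zmul, add2_def]
  refine Form2.ext' ?_ ?_ ?_ ?_ ?_ ?_
  · funext x; show (FA.a34 x + B x) = B x; simp [FA]
  · funext x; show -((FA.a24 x + 0) / fmet x) = 0; simp [FA]
  · funext x; show fmet x * (FA.a23 x + 0) = 0; simp [FA]
  · funext x; show (FA.a14 x + 0) / fmet x = 0; simp [FA]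
  · funext x; show -(fmet x * (FA.a13 x + (0:F0) x)) = m x
    rw [show (0:F0) x = 0 from rfl, add_zero, fmet_mul_a13]; rfl
  · funext x; show FA.a12 x + B x = FA.a12 x + B x; rfl

private lemma part1 : FA = d1 Aloc := by
  simp only [d1, Aloc]
  refine Form2.ext' ?_ ?_ ?_ ?_ ?_ ?_ <;> funext x <;>
    simp only [FA, Pi.sub_apply, pd_zero, Pi.zero_apply]
  · rw [pdA1_1]; ring
  · rw [pdA3_0, pdA1_2]; ring
  · rw [pdA1_3]; ring
  · rw [pdA3_1]; ring
  · ring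
  · rw [pdA3_3]; ring

private lemma part2 : d2 (star2 FA) = (0 : Form3) := by
  rw [star2_FA]
  simp only [d2, FA]
  refine Form3.ext' ?_ ?_ ?_ ?_ <;> funext x <;>
    simp only [Pi.sub_apply, Pi.add_apply, pd_zero, Pi.zero_apply] <;>
    show _ = (0:ℝ)
  · ring
  · rw [pdm_0]; ring
  · rw [pdF_0]; ring
  · rw [pdF_1, pdm_2]; ring

private lemma hF12diff (x : X) : DifferentiableAt ℝ FA.a12 x :=
  ((((hx 1 x).const_mul (2:ℝ)).cos.const_mul
    (-(1/(2*π)))).mul ((hx 2 x).sin)).differentiableAt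

private lemma d2_sum (B : F0) (hB : Differentiable ℝ B) :
    d2 (star2 (FA + zmul B)) = ⟨pd 2 B, pd 3 B, pd 0 B, pd 1 B⟩ := by
  rw [star2_sum]
  simp only [d2]
  refine Form3.ext' ?_ ?_ ?_ ?_ <;> funext x <;>
    simp only [Pi.sub_apply, Pi.add_apply, pd_zero, Pi.zero_apply]
  · ring
  · rw [pdm_0]; ring
  · rw [pd_add (hF12diff x) (hB x),
      show FA.a12 = (fun p : X => -(1 / (2 * π)) * cos (2 * p 1) * sin (p 2)) from rfl,
      pdF_0]
    ring
  · rw [pd_add (hF12diff x) (hB x),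
      show FA.a12 = (fun p : X => -(1 / (2 * π)) * cos (2 * p 1) * sin (p 2)) from rfl,
      pdF_1, pdm_2]
    ring

private lemma d2s_sum (B : F0) (hB : Differentiable ℝ B) :
    d2s (FA + zmul B) =
      ⟨pd 1 B, fun x => -(pd 0 B x), fun x => pd 3 B x / fmet x,
       fun x => -(fmet x * pd 2 B x)⟩ := by
  simp only [d2s, d2_sum B hB, star3]
  refine Form1.ext' ?_ ?_ ?_ ?_ <;> funext x <;>
    simp [Pi.neg_apply, Pi.div_apply, Pi.mul_apply]

private lemma d1s_zero : d1s (0 : Form1) = 0 := by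
  have hstar : star1 (0 : Form1) = (0 : Form3) := by
    refine Form3.ext' ?_ ?_ ?_ ?_
    · funext x; show -((0:F0) x / fmet x) = (0:F0) x; simp
    · funext x; show fmet x * (0:F0) x = (0:F0) x; simp
    · funext x; show -((0:F0) x) = (0:F0) x; simp
    · rfl
  funext x
  simp [d1s, hstar, d3, pd_zero, show (0:Form3) = (⟨0,0,0,0⟩ : Form3) from rfl]

private lemma part3 :
    ¬ ∃ B : F0, ContDiff ℝ (⊤ : ℕ∞) B ∧ Periodic4 B
        ∧ d2s (FA + zmul B) = (0 : Form1)
        ∧ zs (FA + zmul B) + d1s (d0 B) = (0 : F0) := by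
  rintro ⟨B, hB, -, h1, h2⟩
  have hBd : Differentiable ℝ B := hB.differentiable (by simp)
  rw [d2s_sum B hBd, show (0:Form1) = (⟨0,0,0,0⟩ : Form1) from rfl] at h1
  have e1 : ∀ x : X, pd 1 B x = 0 := fun x => congrFun (congrArg Form1.a1 h1) x
  have e0 : ∀ x : X, pd 0 B x = 0 := by
    intro x
    have h := congrFun (congrArg Form1.a2 h1) x
    simpa using h
  have e3 : ∀ x : X, pd 3 B x = 0 := by
    intro x
    have h := congrFun (congrArg Form1.a3 h1) x
    have hf := (fmet_pos x).ne'
    simp only [Pi.zero_apply, div_eq_zero_iff] at h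
    exact h.resolve_right hf
  have e2 : ∀ x : X, pd 2 B x = 0 := by
    intro x
    have h := congrFun (congrArg Form1.a4 h1) x
    have hf := (fmet_pos x).ne'
    simp only [Pi.zero_apply, neg_eq_zero, mul_eq_zero] at h
    exact h.resolve_left hf
  have hconst : ∀ x y : X, B x = B y := by
    apply is_const_of_fderiv_eq_zero hBd
    intro x
    have hz : ∀ i : Fin 4, fderiv ℝ B x (Pi.single i 1) = 0 := by
      intro i
      fin_cases i
      exacts [e0 x, e1 x, e2 x, e3 x]
    ext v
    have hv : (∑ i : Fin 4, v i • (Pi.single i 1 : X)) = v := by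
      funext j
      simp [Finset.sum_apply, Pi.single_apply]
    rw [← hv, map_sum]
    simp [hz]
  have hd0 : d0 B = (0 : Form1) :=
    Form1.ext' (funext e0) (funext e1) (funext e2) (funext e3)
  rw [hd0, d1s_zero, add_zero] at h2
  have hzs : ∀ x : X, FA.a12 x + B x + B x = 0 := by
    intro x
    have h2' := congrFun h2 x
    simp only [zs, star2_sum, w22, zeta, Pi.add_apply, Pi.sub_apply, Pi.mul_apply,
      Pi.zero_apply, Pi.one_apply, one_mul, zero_mul, mul_zero, sub_zero, add_zero,
      zero_add] at h2'
    linarith [h2']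
  have h0 := hzs (fun _ => 0)
  have hs := hzs (fun i => if i = 2 then π/2 else 0)
  have hc := hconst (fun i : Fin 4 => if i = 2 then π/2 else 0) (fun _ => 0)
  simp [FA] at h0 hs
  have hcontra : π⁻¹ * 2⁻¹ = 0 := by linarith
  simp [Real.pi_ne_zero] at hcontra

/-- On `T⁴` with the metric `g` above and
`ζ = dx₁∧dx₂ + dx₃∧dx₄`: the `U(1)` connection `A = dy + Aloc` has curvature `F_A`
as displayed (`F_A = d Aloc`), satisfies the abelian Yang–Mills equation
`d * F_A = 0`, and yet there exists no function `B` on `T⁴` making `(A, B)` a cone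
Yang–Mills solution with respect to `ζ`, i.e. satisfying
`d^*(F_A + ζB) = 0` and `ζ^*(F_A + ζB) + d^* d B = 0`. -/
theorem yang_mills_connection_with_no_cone_partner :
    FA = d1 Aloc
    ∧ d2 (star2 FA) = (0 : Form3)
    ∧ ¬ ∃ B : F0, ContDiff ℝ (⊤ : ℕ∞) B ∧ Periodic4 B
        ∧ d2s (FA + zmul B) = (0 : Form1)
        ∧ zs (FA + zmul B) + d1s (d0 B) = (0 : F0) :=
  ⟨part1, part2, part3⟩

end

end ConeYMT4
end

section
/- Let ρ, ρ̄: Γ → G be homomorphisms, where Γ = Ψ^a_a(M)/Ψ^a_{a,ζ}(M). If the bundles with connections (P_ρ, A_ρ) and (P_ρ̄, A_ρ̄) are equivalent (there is a G-bundle isomorphism f with f*A_ρ̄ = A_ρ), then ρ and ρ̄ are conjugate in G. -/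
/-- Data of a non-zero, non-degenerate, closed two-form `ζ` on the path-connected
space `M`, recorded through the based loops that bound disks of a given `ζ`-integral,
together with the quotient group `Γ = Ψ^a_a(M)/Ψ^a_{a,ζ}(M)` of the semigroup of
loops at `a` (up to reparametrisation) by the subsemigroup of loops bounding disks of
zero `ζ`-integral. -/
structure ZetaLoopData (M : Type) [TopologicalSpace M] (a : M)
    (Γ : Type) [Group Γ] where
  /-- `bounds γ r`: the loop `γ` is null-homotopic and is the boundary of an oriented
  disk `D` in `M` with `∫_D ζ = r`. -/
  bounds : Path a a → ℝ → Prop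
  bounds_refl : bounds (Path.refl a) 0
  bounds_trans : ∀ {γ δ : Path a a} {r s : ℝ},
    bounds γ r → bounds δ s → bounds (γ.trans δ) (r + s)
  bounds_symm : ∀ {γ : Path a a} {r : ℝ}, bounds γ r → bounds γ.symm (-r)
  bounds_cancel : ∀ {b : M} (δ : Path a b), bounds (δ.trans δ.symm) 0
  /-- `ζ ≠ 0` and non-degenerate: every real number is the `ζ`-integral of a disk
  bounded by some contractible loop at `a`. -/
  bounds_surj : ∀ r : ℝ, ∃ γ : Path a a, bounds γ r
  /-- The quotient map `Ψ^a_a(M) → Γ = Ψ^a_a(M)/Ψ^a_{a,ζ}(M)`. -/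
  q : Path a a → Γ
  q_surj : Function.Surjective q
  q_mul : ∀ γ δ : Path a a, q (γ.trans δ) = q δ * q γ
  q_one : q (Path.refl a) = 1
  q_inv : ∀ γ : Path a a, q γ.symm = (q γ)⁻¹
  /-- Two based loops give the same element of `Γ` iff they differ by an element of
  `Ψ^a_{a,ζ}(M)`. -/
  q_eq_iff : ∀ γ δ : Path a a, q γ = q δ ↔ bounds (γ.trans δ.symm) 0

/-- A principal `G`-bundle with connection over `M`, recorded through its parallel
transport along paths: the fibers are free transitive `G`-spaces and transport is
`G`-equivariant and functorial in the path. -/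
structure TransportBundle (M : Type) [TopologicalSpace M] (G : Type) [Group G] where
  total : Type
  proj : total → M
  proj_surj : Function.Surjective proj
  act : total → G → total
  act_one : ∀ p, act p 1 = p
  act_mul : ∀ (p : total) (g h : G), act (act p g) h = act p (g * h)
  proj_act : ∀ p g, proj (act p g) = proj p
  act_free : ∀ p g, act p g = p → g = 1
  act_trans : ∀ p q, proj p = proj q → ∃ g, act p g = q
  transp : ∀ {x y : M}, Path x y → total → total
  transp_proj : ∀ {x y : M} (γ : Path x y) (p), proj p = x → proj (transp γ p) = y
  transp_act : ∀ {x y : M} (γ : Path x y) (p) (g), transp γ (act p g) = act (transp γ p) g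
  transp_trans : ∀ {x y z : M} (γ : Path x y) (δ : Path y z) (p),
    transp (γ.trans δ) p = transp δ (transp γ p)
  transp_refl : ∀ (x : M) (p), transp (Path.refl x) p = p
  transp_symm : ∀ {x y : M} (γ : Path x y) (p), transp γ.symm (transp γ p) = p

variable {M : Type} [TopologicalSpace M] {Γ : Type} [Group Γ] {G : Type} [Group G]

/-- The relation `(δγ, g) ∼ (δ, ρ(γ)g)` on `Ψ_a(M) × G` defining the associated
bundle `P_ρ = Ψ_a(M) ×_ρ G`; `Ψ` abstracts the principal `Γ`-bundle `Ψ_a(M)` of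
paths out of `a` modulo `Ψ^a_{a,ζ}(M)`. -/
def assocSetoid (Ψ : TransportBundle M Γ) (ρ : Γ →* G) : Setoid (Ψ.total × G) where
  r p q := ∃ γ : Γ, q.1 = Ψ.act p.1 γ ∧ q.2 = ρ γ⁻¹ * p.2
  iseqv := by
    constructor
    · exact fun p => ⟨1, by simp [Ψ.act_one]⟩
    · rintro ⟨p1, p2⟩ ⟨q1, q2⟩ ⟨γ, h1, h2⟩
      dsimp only at h1 h2
      subst h1; subst h2
      refine ⟨γ⁻¹, ?_, ?_⟩
      · simp [Ψ.act_mul, Ψ.act_one]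
      · simp [← mul_assoc, ← map_mul]
    · rintro ⟨p1, p2⟩ ⟨q1, q2⟩ ⟨r1, r2⟩ ⟨γ, h1, h2⟩ ⟨γ', h1', h2'⟩
      dsimp only at h1 h2 h1' h2'
      subst h1; subst h2; subst h1'; subst h2'
      refine ⟨γ * γ', ?_, ?_⟩
      · simp [Ψ.act_mul]
      · simp [mul_inv_rev, map_mul, mul_assoc]

/-- The total space of `P_ρ = Ψ_a(M) ×_ρ G`. -/
def AssocTotal (Ψ : TransportBundle M Γ) (ρ : Γ →* G) : Type :=
  Quotient (assocSetoid Ψ ρ)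

/-- The class `[δ, g] ∈ P_ρ`. -/
def assocMk (Ψ : TransportBundle M Γ) (ρ : Γ →* G) (p : Ψ.total) (g : G) :
    AssocTotal Ψ ρ :=
  Quotient.mk (assocSetoid Ψ ρ) (p, g)

/-- The bundle projection `P_ρ → M`. -/
def assocProj (Ψ : TransportBundle M Γ) (ρ : Γ →* G) : AssocTotal Ψ ρ → M :=
  Quotient.lift (fun p => Ψ.proj p.1) (by
    rintro ⟨p1, p2⟩ ⟨q1, q2⟩ ⟨γ, h1, _⟩
    dsimp only at h1 ⊢
    rw [h1, Ψ.proj_act])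

/-- The right `G`-action `[δ, g] h = [δ, g h]` on `P_ρ`. -/
def assocAct (Ψ : TransportBundle M Γ) (ρ : Γ →* G) :
    AssocTotal Ψ ρ → G → AssocTotal Ψ ρ := fun p h =>
  Quotient.lift (fun q => assocMk Ψ ρ q.1 (q.2 * h)) (by
    rintro ⟨p1, p2⟩ ⟨q1, q2⟩ ⟨γ, h1, h2⟩
    exact Quotient.sound ⟨γ, h1, by rw [h2, mul_assoc]⟩) p

/-- Parallel transport in `P_ρ` for the connection `A_ρ`: the horizontal lift of a
path `α` starting at `[δ, g]` is `t ↦ [α_{(t)} δ, g]`, i.e. transport along `α` is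
`[δ, g] ↦ [αδ, g]` (concatenation in `Ψ_a(M)`, abstracted by `Ψ.transp`). -/
def assocTransp (Ψ : TransportBundle M Γ) (ρ : Γ →* G) {x y : M} (α : Path x y) :
    AssocTotal Ψ ρ → AssocTotal Ψ ρ :=
  Quotient.lift (fun q => assocMk Ψ ρ (Ψ.transp α q.1) q.2) (by
    rintro ⟨p1, p2⟩ ⟨q1, q2⟩ ⟨γ, h1, h2⟩
    exact Quotient.sound ⟨γ, by rw [h1, Ψ.transp_act], h2⟩)


lemma assocMk_act {M : Type} [TopologicalSpace M] {Γ : Type} [Group Γ] {G : Type}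
    [Group G] (Ψ : TransportBundle M Γ) (ρ : Γ →* G) (u : Ψ.total) (γ : Γ) (g : G) :
    assocMk Ψ ρ (Ψ.act u γ) g = assocMk Ψ ρ u (ρ γ * g) := by
  exact Quotient.sound ⟨γ⁻¹, by simp [Ψ.act_mul, Ψ.act_one], by simp⟩

lemma assocMk_inj {M : Type} [TopologicalSpace M] {Γ : Type} [Group Γ] {G : Type}
    [Group G] (Ψ : TransportBundle M Γ) (ρ : Γ →* G) (u : Ψ.total) (g h : G)
    (heq : assocMk Ψ ρ u g = assocMk Ψ ρ u h) : g = h := by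
  obtain ⟨γ, h1, h2⟩ := Quotient.exact heq
  dsimp only at h1 h2
  have : γ = 1 := Ψ.act_free u γ h1.symm
  subst this
  simpa using h2.symm

/-- **equivalent bundles come from conjugate homomorphisms.**

Setting as in the paper's construction: `M` path-connected with base point `a`, `ζ`
abstracted by `Z : ZetaLoopData` (loops bounding disks of given `ζ`-integral and the
group `Γ = Ψ^a_a(M)/Ψ^a_{a,ζ}(M)` with quotient map `Z.q`).  `Ψ` abstracts the
principal `Γ`-bundle `Ψ_a(M)` of paths out of `a` modulo `Ψ^a_{a,ζ}(M)`: transport is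
path concatenation, every point is the endpoint of a horizontal lift from the class
`u₀` of the constant path (`hreach`), and the holonomy of a based loop `γ` at `u₀` is
its class `Z.q γ` (`hΨhol`).  `P_ρ = Ψ_a(M) ×_ρ G` (`AssocTotal`) carries the
connection `A_ρ` whose parallel transport is `[δ, g] ↦ [αδ, g]` (`assocTransp`).

If `(P_ρ, A_ρ)` and `(P_ρ', A_ρ')` are equivalent — there is a `G`-bundle isomorphism
`f : P_ρ → P_ρ'` with `f^* A_ρ' = A_ρ`, i.e. a fiber-preserving `G`-equivariant
bijection commuting with the parallel transports — then `ρ` and `ρ'` are conjugate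
homomorphisms from `Γ` to `G`. -/
theorem equivalent_bundles_give_conjugate_homomorphisms
    {M : Type} [TopologicalSpace M] [PathConnectedSpace M] {a : M}
    {Γ : Type} [Group Γ] {G : Type} [Group G]
    (Z : ZetaLoopData M a Γ)
    (Ψ : TransportBundle M Γ) (u₀ : Ψ.total) (hu₀ : Ψ.proj u₀ = a)
    (hΨhol : ∀ γ : Path a a, Ψ.transp γ u₀ = Ψ.act u₀ (Z.q γ))
    (hreach : ∀ p : Ψ.total, ∃ (x : M) (δ : Path a x), p = Ψ.transp δ u₀)
    (ρ ρ' : Γ →* G)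
    (f : AssocTotal Ψ ρ → AssocTotal Ψ ρ')
    (hbij : Function.Bijective f)
    (hproj : ∀ p, assocProj Ψ ρ' (f p) = assocProj Ψ ρ p)
    (hact : ∀ (p : AssocTotal Ψ ρ) (h : G), f (assocAct Ψ ρ p h) = assocAct Ψ ρ' (f p) h)
    (htransp : ∀ (x y : M) (α : Path x y) (p : AssocTotal Ψ ρ),
        f (assocTransp Ψ ρ α p) = assocTransp Ψ ρ' α (f p)) :
    ∃ g₀ : G, ∀ x : Γ, ρ' x = g₀ * ρ x * g₀⁻¹ := by
  classical
  obtain ⟨⟨p, g⟩, hp⟩ := Quotient.exists_rep (f (assocMk Ψ ρ u₀ 1))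
  have hpa : Ψ.proj p = a := by
    have := hproj (assocMk Ψ ρ u₀ 1)
    rw [← hp] at this
    simpa [assocProj, assocMk, hu₀] using this
  obtain ⟨x, δ, hδ⟩ := hreach p
  have hx : a = x := by
    rw [hδ, Ψ.transp_proj δ u₀ hu₀] at hpa; exact hpa.symm
  subst hx
  have hfmk : f (assocMk Ψ ρ u₀ 1) = assocMk Ψ ρ' u₀ (ρ' (Z.q δ) * g) := by
    rw [← hp, hδ, hΨhol δ]
    exact assocMk_act Ψ ρ' u₀ (Z.q δ) g
  set g₀ : G := ρ' (Z.q δ) * g with hg₀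
  refine ⟨g₀, fun x => ?_⟩
  obtain ⟨γ, rfl⟩ := Z.q_surj x
  have key : assocMk Ψ ρ' u₀ (ρ' (Z.q γ) * g₀) = assocMk Ψ ρ' u₀ (g₀ * ρ (Z.q γ)) := by
    have h1 : f (assocTransp Ψ ρ γ (assocMk Ψ ρ u₀ 1))
        = assocMk Ψ ρ' u₀ (ρ' (Z.q γ) * g₀) := by
      rw [htransp _ _ γ, hfmk]
      show assocMk Ψ ρ' (Ψ.transp γ u₀) g₀ = _
      rw [hΨhol γ]
      exact assocMk_act Ψ ρ' u₀ (Z.q γ) g₀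
    have h2 : assocTransp Ψ ρ γ (assocMk Ψ ρ u₀ 1)
        = assocAct Ψ ρ (assocMk Ψ ρ u₀ 1) (ρ (Z.q γ)) := by
      show assocMk Ψ ρ (Ψ.transp γ u₀) 1 = assocMk Ψ ρ u₀ (1 * ρ (Z.q γ))
      rw [hΨhol γ, assocMk_act Ψ ρ u₀ (Z.q γ) 1]
      simp
    have h3 : f (assocAct Ψ ρ (assocMk Ψ ρ u₀ 1) (ρ (Z.q γ)))
        = assocMk Ψ ρ' u₀ (g₀ * ρ (Z.q γ)) := by
      rw [hact, hfmk]
      rfl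
    rw [← h1, h2, h3]
  have := assocMk_inj Ψ ρ' u₀ _ _ key
  rw [← this]
  group
end
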